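/- arXiv:1407.1591 — 2 statements merged into one kernel-verified Lean document; each statement's English description precedes it below -/
import Mathlib

section
/- There is a universal constant C > 0 such that the following holds. Let X ~ Binomial(m, p) and Y ~ Binomial(n, q) be independent with m ≥ 2, q ∈ [0,1], mp ≥ 64 log m, and p ≤ 2/3. Then for every real ℓ with 1 ≤ ℓ ≤ √(mp log m), Pr(Y ≥ X + ℓ) ≥ Pr(Y ≥ X) · exp(−C ℓ √(log m / (mp))) − 2 m^{-2}. -/
open Real Filter

/-- Probability that a Binomial(m, p) random variable equals `k`. -/
noncomputable def binomProb (m : ℕ) (p : ℝ) (k : ℕ) : ℝ :=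
  (m.choose k : ℝ) * p ^ k * (1 - p) ^ (m - k)

/-- For independent `X ~ Binomial(m, p)` and `Y ~ Binomial(n, q)`,
the probability `Pr(Y ≥ X - ℓ)`. -/
noncomputable def prGEshift (m : ℕ) (p : ℝ) (n : ℕ) (q : ℝ) (ℓ : ℝ) : ℝ :=
  ∑ j ∈ Finset.range (m + 1), ∑ k ∈ Finset.range (n + 1),
    if (j : ℝ) - ℓ ≤ (k : ℝ) then binomProb m p j * binomProb n q k else 0

/-- For independent `X ~ Binomial(m, p)` and `Y ~ Binomial(n, q)`,
the probability `Pr(Y ≥ X)`. -/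
noncomputable def prGE (m : ℕ) (p : ℝ) (n : ℕ) (q : ℝ) : ℝ :=
  prGEshift m p n q 0

/-- `P(m, n, p, q) = Pr(Y ≥ X)` for independent `X ~ Binomial(m, max p q)`
and `Y ~ Binomial(n, min p q)`. -/
noncomputable def Pmn (m n : ℕ) (p q : ℝ) : ℝ :=
  prGE m (max p q) n (min p q)

/-- `P(n, p, q) = P(n, n, p, q)`. -/
noncomputable def Pn (n : ℕ) (p q : ℝ) : ℝ :=
  Pmn n n p q

/-!
Write `μ = m p`, `s = √(log m / μ)` and `L = ⌈ℓ⌉`. Conditioning on `X`,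
`Pr(Y ≥ X + ℓ) = E[G(X + L)]` with `G(i) = Pr(Y ≥ i) ∈ [0, 1]`. Above `(1 - 5s)μ` consecutive
binomial probabilities satisfy `Pr(X = i) ≥ exp(-26 s) Pr(X = i + 1)`, so for `j ≥ (1 - 3s)μ`
we get `Pr(X = j - L) ≥ exp(-26 L s) Pr(X = j)`: shifting the sum by `L` loses at most that
factor on the bulk, and the Chernoff bound puts mass at most `m⁻²` below `(1 - 3s)μ`.
As `L ≤ 2ℓ`, the constant `C = 52` works.
-/

lemma exp_neg_mul_one_add_le {s : ℝ} (hs0 : 0 ≤ s) (hs : s ≤ 1 / 8) :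
    exp (-(26 * s)) * (1 + 12 * s) ≤ 1 - 5 * s := by
  have h12 : exp (-(26 * s)) * (1 + 12 * s) ≤ exp (-(14 * s)) := by
    calc exp (-(26 * s)) * (1 + 12 * s) ≤ exp (-(26 * s)) * exp (12 * s) := by
          gcongr; linarith [Real.add_one_le_exp (12 * s)]
      _ = exp (-(14 * s)) := by rw [← Real.exp_add]; ring_nf
  have h14 : exp (-(14 * s)) * (1 + 14 * s) ≤ 1 := by
    calc exp (-(14 * s)) * (1 + 14 * s) ≤ exp (-(14 * s)) * exp (14 * s) := by
          gcongr; linarith [Real.add_one_le_exp (14 * s)]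
      _ = 1 := by rw [← Real.exp_add]; simp
  nlinarith [Real.exp_pos (-(14 * s))]

lemma exp_neg_two_mul_log {m : ℕ} (hm : 0 < m) : exp (-(2 * log m)) = 1 / (m : ℝ) ^ 2 := by
  rw [← Nat.cast_ofNat, ← Real.log_pow, Real.exp_neg, Real.exp_log (by positivity), one_div]

lemma pow_mul_le_of_forall_mul_succ_le {f : ℕ → ℝ} {c : ℝ} (hc : 0 ≤ c) {a L : ℕ}
    (h : ∀ i < L, c * f (a + i + 1) ≤ f (a + i)) : c ^ L * f (a + L) ≤ f a := by
  induction L with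
  | zero => simp
  | succ L ih =>
    calc c ^ (L + 1) * f (a + (L + 1)) = c ^ L * (c * f (a + L + 1)) := by ring_nf
      _ ≤ c ^ L * f (a + L) := by gcongr; exact h L (by omega)
      _ ≤ f a := ih fun i hi => h i (by omega)

lemma sum_filter_le_tsub_le_sum {F : ℕ → ℝ} (hF : ∀ j, 0 ≤ F j) (N L : ℕ) :
    ∑ k ∈ (Finset.range N).filter (L ≤ ·), F (k - L) ≤ ∑ j ∈ Finset.range N, F j := by
  rw [← Finset.sum_image (g := (· - L)) fun x hx y hy hxy => by
    simp only [Finset.mem_coe, Finset.mem_filter] at hx hy; simp only at hxy; omega]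
  refine Finset.sum_le_sum_of_subset_of_nonneg (fun j hj => ?_) fun j _ _ => hF j
  simp only [Finset.mem_image, Finset.mem_filter, Finset.mem_range] at hj ⊢
  omega

section Binomial

variable {m : ℕ} {p : ℝ}

lemma binomProb_nonneg (hp0 : 0 ≤ p) (hp1 : p ≤ 1) (k : ℕ) : 0 ≤ binomProb m p k := by
  have : 0 ≤ 1 - p := by linarith
  unfold binomProb
  positivity

lemma sum_binomProb_mul_pow (x : ℝ) :
    ∑ k ∈ Finset.range (m + 1), binomProb m p k * x ^ k = (p * x + (1 - p)) ^ m := by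
  rw [add_pow]
  refine Finset.sum_congr rfl fun k _ => ?_
  unfold binomProb
  ring

lemma sum_binomProb : ∑ k ∈ Finset.range (m + 1), binomProb m p k = 1 := by
  simpa using sum_binomProb_mul_pow (m := m) (p := p) 1

lemma binomProb_succ_mul (j : ℕ) :
    binomProb m p (j + 1) * ((j + 1) * (1 - p)) = binomProb m p j * ((m - j : ℕ) * p) := by
  have hchoose : ((m.choose (j + 1) : ℕ) : ℝ) * (j + 1) = (m.choose j : ℝ) * (m - j : ℕ) := by
    exact_mod_cast Nat.choose_succ_right_eq m j
  unfold binomProb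
  rcases lt_or_ge j m with hj | hj
  · obtain ⟨r, rfl⟩ : ∃ r, m = j + 1 + r := ⟨m - (j + 1), by omega⟩
    rw [show j + 1 + r - j = r + 1 by omega] at hchoose ⊢
    rw [Nat.add_sub_cancel_left]
    linear_combination p ^ (j + 1) * (1 - p) ^ (r + 1) * hchoose
  · simp [Nat.choose_eq_zero_of_lt (Nat.lt_succ_of_le hj), Nat.sub_eq_zero_of_le hj]

lemma sum_binomProb_le_exp_mul_mgf (hp0 : 0 ≤ p) (hp1 : p ≤ 1) (a : ℝ) {t : ℝ} (ht : 0 ≤ t) :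
    ∑ k ∈ (Finset.range (m + 1)).filter (fun k : ℕ => (k : ℝ) ≤ a), binomProb m p k
      ≤ exp (t * a) * (p * exp (-t) + (1 - p)) ^ m := by
  rw [← sum_binomProb_mul_pow, Finset.mul_sum]
  refine (Finset.sum_le_sum fun k hk => ?_).trans
    (Finset.sum_le_sum_of_subset_of_nonneg (Finset.filter_subset _ _) fun k _ _ => ?_)
  · have hka : (k : ℝ) ≤ a := (Finset.mem_filter.1 hk).2
    have : 1 ≤ exp (t * a) * exp (-t) ^ k := by
      rw [← Real.exp_nat_mul, ← Real.exp_add, Real.one_le_exp_iff]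
      nlinarith
    nlinarith [binomProb_nonneg hp0 hp1 (m := m) k]
  · have := binomProb_nonneg hp0 hp1 (m := m) k
    positivity

lemma sum_binomProb_le_exp_neg_sq (hp0 : 0 ≤ p) (hp1 : p ≤ 1) {δ : ℝ} (hδ0 : 0 ≤ δ)
    (hδ2 : δ ≤ 2) :
    ∑ k ∈ (Finset.range (m + 1)).filter (fun k : ℕ => (k : ℝ) ≤ (1 - δ) * (m * p)),
        binomProb m p k ≤ exp (-(δ ^ 2 * (m * p) / 4)) := by
  set t := δ / 2 with ht
  have hexp : exp (-t) ≤ 1 - t + t ^ 2 := by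
    have := Real.abs_exp_sub_one_sub_id_le (x := -t) (by rw [abs_le]; constructor <;> linarith)
    rw [abs_le] at this
    linarith [this.2, neg_sq t]
  have hmgf : p * exp (-t) + (1 - p) ≤ exp (p * (t ^ 2 - t)) := by
    nlinarith [Real.add_one_le_exp (p * (t ^ 2 - t))]
  have hmgf0 : 0 ≤ p * exp (-t) + (1 - p) := by nlinarith [Real.exp_pos (-t)]
  calc _ ≤ exp (t * ((1 - δ) * (m * p))) * (p * exp (-t) + (1 - p)) ^ m :=
        sum_binomProb_le_exp_mul_mgf hp0 hp1 _ (by positivity)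
    _ ≤ exp (t * ((1 - δ) * (m * p))) * exp (p * (t ^ 2 - t)) ^ m := by
        gcongr
    _ = exp (-(δ ^ 2 * (m * p) / 4)) := by
        rw [← Real.exp_nat_mul, ← Real.exp_add, ht]
        ring_nf

lemma exp_mul_binomProb_succ_le {s : ℝ} (hp0 : 0 ≤ p) (hp : p ≤ 2 / 3) (hs : s ≤ 1 / 8)
    (hμs : 1 ≤ m * p * s) {j : ℕ} (hj : j < m) (hjμ : m * p * (1 - 5 * s) ≤ j + 1) :
    exp (-(26 * s)) * binomProb m p (j + 1) ≤ binomProb m p j := by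
  set μ : ℝ := m * p
  have hs0 : 0 ≤ s := by
    by_contra! h
    nlinarith [show 0 ≤ μ by positivity]
  have hq : 0 < 1 - p := by linarith
  have hmj : ((m - j : ℕ) : ℝ) = m - (j + 1) + 1 := by push_cast [Nat.cast_sub hj.le]; ring
  have hupper : ((m - j : ℕ) : ℝ) * p ≤ μ * (1 - p) * (1 + 12 * s) := by
    rw [hmj]
    nlinarith
  have hratio : exp (-(26 * s)) * ((m - j : ℕ) * p) ≤ (j + 1) * (1 - p) :=
    calc exp (-(26 * s)) * ((m - j : ℕ) * p)
        ≤ exp (-(26 * s)) * (μ * (1 - p) * (1 + 12 * s)) := by gcongr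
      _ = μ * (1 - p) * (exp (-(26 * s)) * (1 + 12 * s)) := by ring
      _ ≤ μ * (1 - p) * (1 - 5 * s) :=
          mul_le_mul_of_nonneg_left (exp_neg_mul_one_add_le hs0 hs) (by positivity)
      _ ≤ (j + 1) * (1 - p) := by nlinarith
  have hb := binomProb_nonneg hp0 (by linarith) (m := m) j
  refine le_of_mul_le_mul_right ?_ (show 0 < ((j : ℝ) + 1) * (1 - p) by positivity)
  calc exp (-(26 * s)) * binomProb m p (j + 1) * ((j + 1) * (1 - p))
      = binomProb m p j * (exp (-(26 * s)) * ((m - j : ℕ) * p)) := by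
        rw [mul_assoc, binomProb_succ_mul]; ring
    _ ≤ binomProb m p j * ((j + 1) * (1 - p)) := by gcongr

lemma exp_mul_binomProb_add_le {s : ℝ} (hp0 : 0 ≤ p) (hp : p ≤ 2 / 3) (hs : s ≤ 1 / 8)
    (hμs : 1 ≤ m * p * s) {j L : ℕ} (hL : (L : ℝ) ≤ 2 * (m * p) * s) (hjL : j + L ≤ m)
    (hjμ : (1 - 3 * s) * (m * p) ≤ j + L) :
    exp (-(26 * L * s)) * binomProb m p (j + L) ≤ binomProb m p j := by
  rw [show -(26 * L * s) = L * -(26 * s) by ring, Real.exp_nat_mul]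
  refine pow_mul_le_of_forall_mul_succ_le (Real.exp_pos _).le fun i hi => ?_
  refine exp_mul_binomProb_succ_le hp0 hp hs hμs (by omega) ?_
  have : (j : ℝ) + L ≤ j + i + 1 + L := by linarith
  push_cast
  nlinarith

lemma exp_mul_sum_binomProb_mul_sub_le_shift {G : ℕ → ℝ} (hG0 : ∀ i, 0 ≤ G i) (hG1 : ∀ i, G i ≤ 1)
    {s : ℝ} (hp0 : 0 ≤ p) (hp : p ≤ 2 / 3) (hs : s ≤ 1 / 8) (hμs : 1 ≤ m * p * s) {L : ℕ}
    (hL : (L : ℝ) ≤ 2 * (m * p) * s) :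
    exp (-(26 * L * s)) * ∑ j ∈ Finset.range (m + 1), binomProb m p j * G j
        - exp (-((3 * s) ^ 2 * (m * p) / 4))
      ≤ ∑ j ∈ Finset.range (m + 1), binomProb m p j * G (j + L) := by
  have hp1 : p ≤ 1 := by linarith
  have hb := binomProb_nonneg hp0 hp1 (m := m)
  have hs0 : 0 ≤ s := by
    by_contra! h
    nlinarith [show 0 ≤ (m : ℝ) * p by positivity]
  set c := exp (-(26 * L * s))
  have hc1 : c ≤ 1 := Real.exp_le_one_iff.2 (by nlinarith)
  have hpoint : ∀ k ∈ Finset.range (m + 1), c * (binomProb m p k * G k) ≤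
      (if L ≤ k then binomProb m p (k - L) * G (k - L + L) else 0) +
        (if (k : ℝ) ≤ (1 - 3 * s) * (m * p) then binomProb m p k else 0) := by
    intro k hk
    by_cases hlow : (k : ℝ) ≤ (1 - 3 * s) * (m * p)
    · have : 0 ≤ if L ≤ k then binomProb m p (k - L) * G (k - L + L) else 0 := by
        split_ifs
        exacts [mul_nonneg (hb _) (hG0 _), le_rfl]
      have hbG : binomProb m p k * G k ≤ binomProb m p k := mul_le_of_le_one_right (hb k) (hG1 k)
      have := mul_le_of_le_one_left (mul_nonneg (hb k) (hG0 k)) hc1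
      rw [if_pos hlow]
      linarith
    · have hLk : L ≤ k := by exact_mod_cast (show (L : ℝ) ≤ k by nlinarith)
      obtain ⟨j, rfl⟩ : ∃ j, k = j + L := ⟨k - L, by omega⟩
      rw [if_pos hLk, if_neg hlow, Nat.add_sub_cancel, add_zero, ← mul_assoc]
      exact mul_le_mul_of_nonneg_right (exp_mul_binomProb_add_le hp0 hp hs hμs hL
        (by simpa using hk) (by push_cast at hlow ⊢; linarith)) (hG0 _)
  have hshift := sum_filter_le_tsub_le_sum (fun j => mul_nonneg (hb j) (hG0 (j + L))) (m + 1) L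
  have htail := sum_binomProb_le_exp_neg_sq (m := m) hp0 hp1 (δ := 3 * s) (by positivity)
    (by linarith)
  rw [Finset.mul_sum]
  refine sub_le_iff_le_add.2 ((Finset.sum_le_sum hpoint).trans ?_)
  rw [Finset.sum_add_distrib, ← Finset.sum_filter, ← Finset.sum_filter]
  exact add_le_add hshift htail

end Binomial

/-- `binomTail n q i = Pr(Y ≥ i)` for `Y ~ Binomial(n, q)`. -/
noncomputable def binomTail (n : ℕ) (q : ℝ) (i : ℕ) : ℝ :=
  ∑ k ∈ (Finset.range (n + 1)).filter (i ≤ ·), binomProb n q k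

lemma binomTail_nonneg {n : ℕ} {q : ℝ} (hq0 : 0 ≤ q) (hq1 : q ≤ 1) (i : ℕ) :
    0 ≤ binomTail n q i :=
  Finset.sum_nonneg fun k _ => binomProb_nonneg hq0 hq1 k

lemma binomTail_le_one {n : ℕ} {q : ℝ} (hq0 : 0 ≤ q) (hq1 : q ≤ 1) (i : ℕ) :
    binomTail n q i ≤ 1 :=
  sum_binomProb (m := n) (p := q) ▸ Finset.sum_le_sum_of_subset_of_nonneg
    (Finset.filter_subset _ _) fun k _ _ => binomProb_nonneg hq0 hq1 k

lemma prGEshift_neg_eq_sum_binomTail (m n : ℕ) (p q : ℝ) {ℓ : ℝ} (hℓ : 0 ≤ ℓ) :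
    prGEshift m p n q (-ℓ) =
      ∑ j ∈ Finset.range (m + 1), binomProb m p j * binomTail n q (j + ⌈ℓ⌉₊) := by
  unfold prGEshift binomTail
  refine Finset.sum_congr rfl fun j _ => ?_
  rw [Finset.sum_filter, Finset.mul_sum]
  refine Finset.sum_congr rfl fun k _ => ?_
  rw [mul_ite, mul_zero]
  congr 1
  have hceil : ((⌈ℓ⌉₊ : ℕ) : ℤ) = ⌈ℓ⌉ := Int.natCast_ceil_eq_ceil hℓ
  have : (j : ℝ) - -ℓ ≤ k ↔ ⌈ℓ⌉ ≤ (k : ℤ) - j := by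
    rw [Int.ceil_le]; push_cast; constructor <;> intro h <;> linarith
  rw [this, eq_iff_iff]
  omega

lemma prGE_eq_sum_binomTail (m n : ℕ) (p q : ℝ) :
    prGE m p n q = ∑ j ∈ Finset.range (m + 1), binomProb m p j * binomTail n q j := by
  simpa [prGE] using prGEshift_neg_eq_sum_binomTail m n p q le_rfl

theorem large_majority_lower_bound :
    ∃ C : ℝ, 0 < C ∧ ∀ (m n : ℕ) (p q ℓ : ℝ),
      2 ≤ m → 0 ≤ q → q ≤ 1 → 0 ≤ p → p ≤ 2 / 3 →
      64 * Real.log m ≤ (m : ℝ) * p →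
      1 ≤ ℓ → ℓ ≤ Real.sqrt ((m : ℝ) * p * Real.log m) →
      prGE m p n q * Real.exp (-(C * ℓ * Real.sqrt (Real.log m / ((m : ℝ) * p))))
          - 2 / (m : ℝ) ^ 2 ≤
        prGEshift m p n q (-ℓ) := by
  refine ⟨52, by norm_num, fun m n p q ℓ hm hq0 hq1 hp0 hp h64 hℓ1 hℓ => ?_⟩
  have hlog : 0 < log m := Real.log_pos (by exact_mod_cast hm)
  have hμ : 0 < (m : ℝ) * p := by linarith
  set s := sqrt (log m / (m * p))
  have hs2 : (m : ℝ) * p * s ^ 2 = log m := by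
    rw [Real.sq_sqrt (by positivity), mul_div_cancel₀ _ hμ.ne']
  have hs : s ≤ 1 / 8 := by
    rw [Real.sqrt_le_left (by norm_num), div_le_iff₀ hμ]; linarith
  have hℓs : ℓ ≤ m * p * s := by
    rwa [show (m : ℝ) * p * log m = (m * p * s) ^ 2 by rw [← hs2]; ring,
      Real.sqrt_sq (by positivity)] at hℓ
  have hL : (⌈ℓ⌉₊ : ℝ) ≤ 2 * ℓ := by linarith [Nat.ceil_lt_add_one (by linarith : 0 ≤ ℓ)]
  have hshift := exp_mul_sum_binomProb_mul_sub_le_shift (m := m) (L := ⌈ℓ⌉₊)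
    (binomTail_nonneg (n := n) hq0 hq1) (binomTail_le_one hq0 hq1) hp0 hp hs (by linarith)
    (by linarith)
  rw [← prGE_eq_sum_binomTail, ← prGEshift_neg_eq_sum_binomTail m n p q (by linarith)] at hshift
  have htail : exp (-((3 * s) ^ 2 * (m * p) / 4)) ≤ 2 / (m : ℝ) ^ 2 :=
    calc exp (-((3 * s) ^ 2 * (m * p) / 4)) ≤ exp (-(2 * log m)) :=
          Real.exp_le_exp.2 (by nlinarith)
      _ = 1 / (m : ℝ) ^ 2 := exp_neg_two_mul_log (by omega)
      _ ≤ 2 / (m : ℝ) ^ 2 := by gcongr; norm_num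
  have hcost : exp (-(52 * ℓ * s)) ≤ exp (-(26 * ⌈ℓ⌉₊ * s)) :=
    Real.exp_le_exp.2 (by nlinarith [Real.sqrt_nonneg (log m / (m * p))])
  have hprGE := prGE_eq_sum_binomTail m n p q ▸ Finset.sum_nonneg fun j _ =>
    mul_nonneg (binomProb_nonneg hp0 (by linarith) j) (binomTail_nonneg hq0 hq1 j)
  calc prGE m p n q * exp (-(52 * ℓ * s)) - 2 / (m : ℝ) ^ 2
      ≤ exp (-(26 * ⌈ℓ⌉₊ * s)) * prGE m p n q - exp (-((3 * s) ^ 2 * (m * p) / 4)) := by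
        nlinarith
    _ ≤ prGEshift m p n q (-ℓ) := hshift
end

section
/- Let p_n, q_n be sequences in [0,1] with n · P(n, p_n, q_n) → 0 as n → ∞. Then for every real α > 0, P(⌊α n⌋, p_n, q_n) → 0 as n → ∞. -/
open Real Filter

/-!
Write `D = Y - X` as a sum of `n` independent steps in `{-1, 0, 1}` and let `w_n` be its law,
so `P(n) = Pr(D ≥ 0)`. Splitting `D` into `K` independent blocks of `m` steps gives
`P(m)^K ≤ P(Km)`. When `q ≤ p` the sequence `P(n)` is non-increasing: one more step changes it by
`q(1-p) w_n(-1) - p(1-q) w_n(0)`, and this is `≤ 0` because exponential tilting gives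
`q(1-p) w_n(-1) = p(1-q) w_n(1)` while `w_n` is log-concave, `w_n(-1) w_n(1) ≤ w_n(0)^2`.
With `K ≥ 2/α` and `m = ⌊αn⌋` we get `Km ≥ n`, hence `P(m)^K ≤ P(n) ≤ n P(n) → 0`.
-/

open AddMonoidAlgebra

/- Laws of `ℤ`-valued random variables are elements of `ℝ[ℤ]`; the product is convolution, that is,
the law of the sum of independent variables. -/

noncomputable def tailMass (x : ℤ) : ℝ[ℤ] →ₗ[ℝ] ℝ :=
  Finsupp.linearCombination ℝ (fun ℓ : ℤ => if x ≤ ℓ then (1 : ℝ) else 0) ∘ₗ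
    (coeffLinearEquiv ℝ).toLinearMap

@[simp] lemma tailMass_single (x ℓ : ℤ) (r : ℝ) :
    tailMass x (single ℓ r) = if x ≤ ℓ then r else 0 := by
  rw [tailMass, LinearMap.comp_apply, LinearEquiv.coe_coe, coeffLinearEquiv_apply, coeff_single,
    Finsupp.linearCombination_single, smul_eq_mul, mul_ite, mul_one, mul_zero]

lemma tailMass_eq_coeff_add (x : ℤ) (f : ℝ[ℤ]) :
    tailMass x f = f.coeff x + tailMass (x + 1) f := by
  induction f using induction_linear with
  | zero => simp
  | add f g hf hg => simp only [map_add, coeff_add, Finsupp.add_apply, hf, hg]; ring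
  | single ℓ r =>
    simp only [tailMass_single, coeff_single, Finsupp.single_apply]
    split_ifs <;> first | omega | simp

lemma tailMass_mul_single (x d : ℤ) (r : ℝ) (f : ℝ[ℤ]) :
    tailMass x (f * single d r) = r * tailMass (x - d) f := by
  induction f using induction_linear with
  | zero => simp
  | add f g hf hg => rw [add_mul, map_add, map_add, hf, hg, mul_add]
  | single ℓ s =>
    rw [single_mul_single, tailMass_single, tailMass_single]
    split_ifs <;> first | omega | ring

lemma tailMass_nonneg (x : ℤ) {f : ℝ[ℤ]} (hf : ∀ ℓ, 0 ≤ f.coeff ℓ) : 0 ≤ tailMass x f := by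
  rw [tailMass, LinearMap.comp_apply, LinearEquiv.coe_coe, coeffLinearEquiv_apply,
    Finsupp.linearCombination_apply]
  exact Finsupp.sum_nonneg fun ℓ _ => by split_ifs <;> simp [hf ℓ]

lemma coeff_mul_nonneg {M : Type*} [AddMonoid M] {f g : ℝ[M]} (hf : ∀ ℓ, 0 ≤ f.coeff ℓ)
    (hg : ∀ ℓ, 0 ≤ g.coeff ℓ) :
    ∀ ℓ, 0 ≤ (f * g).coeff ℓ := by
  classical
  intro ℓ
  rw [coeff_mul]
  exact Finsupp.sum_nonneg fun a _ => Finsupp.sum_nonneg fun b _ => by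
    split_ifs
    · exact mul_nonneg (hf a) (hg b)
    · rfl

lemma coeff_pow_nonneg {M : Type*} [AddMonoid M] {f : ℝ[M]} (hf : ∀ ℓ, 0 ≤ f.coeff ℓ) (n : ℕ) :
    ∀ ℓ, 0 ≤ (f ^ n).coeff ℓ := by
  classical
  induction n with
  | zero =>
    intro ℓ
    rw [pow_zero, one_def, coeff_single, Finsupp.single_apply]
    split_ifs <;> norm_num
  | succ n ih => rw [pow_succ]; exact coeff_mul_nonneg ih hf

lemma mul_tailMass_le_tailMass_mul (x y : ℤ) {f g : ℝ[ℤ]} (hf : ∀ ℓ, 0 ≤ f.coeff ℓ)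
    (hg : ∀ ℓ, 0 ≤ g.coeff ℓ) :
    tailMass x f * tailMass y g ≤ tailMass (x + y) (f * g) := by
  conv_lhs => rw [← sum_coeff_single f, ← sum_coeff_single g]
  simp only [AddMonoidAlgebra.mul_def, map_finsuppSum, tailMass_single]
  rw [Finsupp.sum_mul]
  simp only [Finsupp.mul_sum]
  apply Finsupp.sum_le_sum; intro a _
  apply Finsupp.sum_le_sum; intro b _
  split_ifs <;> first | omega | simp [mul_nonneg (hf a) (hg b)]

lemma tailMass_zero_pow_le {f : ℝ[ℤ]} (hf : ∀ ℓ, 0 ≤ f.coeff ℓ) (n : ℕ) :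
    tailMass 0 f ^ n ≤ tailMass 0 (f ^ n) := by
  induction n with
  | zero => rw [pow_zero, pow_zero, one_def, tailMass_single, if_pos le_rfl]
  | succ n ih =>
    calc tailMass 0 f ^ (n + 1) = tailMass 0 f ^ n * tailMass 0 f := pow_succ _ _
      _ ≤ tailMass 0 (f ^ n) * tailMass 0 f := by gcongr; exact tailMass_nonneg 0 hf
      _ ≤ tailMass (0 + 0) (f ^ n * f) :=
          mul_tailMass_le_tailMass_mul 0 0 (coeff_pow_nonneg hf n) hf
      _ = tailMass 0 (f ^ (n + 1)) := by rw [add_zero, pow_succ]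

noncomputable def bernoulliLaw (p : ℝ) (d : ℤ) : ℝ[ℤ] := single 0 (1 - p) + single d p

lemma bernoulliLaw_pow (p : ℝ) (d : ℤ) (n : ℕ) :
    bernoulliLaw p d ^ n = ∑ k ∈ Finset.range (n + 1), single (k * d) (binomProb n p k) := by
  rw [bernoulliLaw, add_comm, add_pow]
  refine Finset.sum_congr rfl fun k _ => ?_
  rw [single_pow, single_pow, natCast_def, single_mul_single, single_mul_single, binomProb,
    smul_zero, add_zero, nsmul_eq_mul, mul_comm _ (_ : ℝ), mul_assoc, add_zero]

lemma prGE_eq_tailMass (m n : ℕ) (p q : ℝ) :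
    prGE m p n q = tailMass 0 (bernoulliLaw q 1 ^ n * bernoulliLaw p (-1) ^ m) := by
  rw [bernoulliLaw_pow, bernoulliLaw_pow, Finset.sum_mul_sum, map_sum, prGE, prGEshift,
    Finset.sum_comm]
  refine Finset.sum_congr rfl fun k _ => ?_
  rw [map_sum]
  refine Finset.sum_congr rfl fun j _ => ?_
  rw [single_mul_single, tailMass_single]
  simp only [sub_zero, mul_one, mul_neg_one, ← sub_eq_add_neg, sub_nonneg, Nat.cast_le,
    mul_comm (binomProb n q k)]

lemma coeff_mul_bernoulliLaw (f : ℝ[ℤ]) (p : ℝ) (d ℓ : ℤ) :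
    (f * bernoulliLaw p d).coeff ℓ = (1 - p) * f.coeff ℓ + p * f.coeff (ℓ - d) := by
  rw [bernoulliLaw, mul_add, coeff_add, Finsupp.add_apply, coeff_mul_single_apply,
    coeff_mul_single_apply, neg_zero, add_zero, ← sub_eq_add_neg, mul_comm, mul_comm (f.coeff _)]

lemma bernoulliLaw_coeff_nonneg {p : ℝ} (hp : p ∈ Set.Icc (0 : ℝ) 1) (d ℓ : ℤ) :
    0 ≤ (bernoulliLaw p d).coeff ℓ := by
  simp only [bernoulliLaw, coeff_add, coeff_single, Finsupp.add_apply, Finsupp.single_apply]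
  split_ifs <;> linarith [hp.1, hp.2]

lemma tailMass_mul_bernoulliLaw (x : ℤ) (f : ℝ[ℤ]) (p : ℝ) (d : ℤ) :
    tailMass x (f * bernoulliLaw p d) = (1 - p) * tailMass x f + p * tailMass (x - d) f := by
  rw [bernoulliLaw, mul_add, map_add, tailMass_mul_single, tailMass_mul_single, sub_zero]

/- Required for all `x ≤ y`, not only `x = y`: this is the form preserved by convolution with a
two-point law when `g` may vanish between two points of its support. -/
def IsLogConcave (g : ℤ → ℝ) : Prop := ∀ x y : ℤ, x ≤ y → g (x - 1) * g (y + 1) ≤ g x * g y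

namespace IsLogConcave

variable {g : ℤ → ℝ}

lemma comp_add_const (hg : IsLogConcave g) (c : ℤ) : IsLogConcave (fun z => g (z + c)) := by
  intro x y hxy
  simpa only [sub_add_eq_add_sub, add_right_comm y 1 c] using hg (x + c) (y + c) (by omega)

lemma mul_add_mul_shift (hg : IsLogConcave g) {u v : ℝ} (hu : 0 ≤ u) (hv : 0 ≤ v) :
    IsLogConcave (fun z => u * g z + v * g (z + 1)) := by
  intro x y hxy
  have h₁ : g (x - 1) * g (y + 1) ≤ g x * g y := hg x y hxy
  have h₂ : g x * g (y + 1 + 1) ≤ g (x + 1) * g (y + 1) := by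
    simpa only [add_sub_cancel_right] using hg (x + 1) (y + 1) (by omega)
  have h₃ : g (x - 1) * g (y + 1 + 1) ≤ g (x + 1) * g y := by
    refine (hg x (y + 1) (by omega)).trans ?_
    rcases hxy.eq_or_lt with rfl | hlt
    · rw [mul_comm]
    · simpa only [add_sub_cancel_right] using hg (x + 1) y hlt
  simp only [sub_add_cancel]
  linarith [mul_le_mul_of_nonneg_left h₁ (mul_nonneg hu hu),
    mul_le_mul_of_nonneg_left h₂ (mul_nonneg hv hv),
    mul_le_mul_of_nonneg_left h₃ (mul_nonneg hu hv)]

end IsLogConcave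

lemma isLogConcave_coeff_one : IsLogConcave (1 : ℝ[ℤ]).coeff := by
  intro x y hxy
  simp only [one_def, coeff_single, Finsupp.single_apply]
  split_ifs <;> first | omega | norm_num

noncomputable def stepLaw (p q : ℝ) : ℝ[ℤ] := bernoulliLaw q 1 * bernoulliLaw p (-1)

lemma stepLaw_coeff_nonneg {p q : ℝ} (hp : p ∈ Set.Icc (0 : ℝ) 1) (hq : q ∈ Set.Icc (0 : ℝ) 1)
    (ℓ : ℤ) : 0 ≤ (stepLaw p q).coeff ℓ :=
  coeff_mul_nonneg (bernoulliLaw_coeff_nonneg hq 1) (bernoulliLaw_coeff_nonneg hp (-1)) ℓ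

lemma coeff_mul_stepLaw (f : ℝ[ℤ]) (p q : ℝ) (ℓ : ℤ) :
    (f * stepLaw p q).coeff ℓ = p * (1 - q) * f.coeff (ℓ + 1)
      + ((1 - p) * (1 - q) + p * q) * f.coeff ℓ + q * (1 - p) * f.coeff (ℓ - 1) := by
  rw [stepLaw, ← mul_assoc, coeff_mul_bernoulliLaw, coeff_mul_bernoulliLaw,
    coeff_mul_bernoulliLaw, sub_neg_eq_add, add_sub_cancel_right]
  ring

lemma isLogConcave_coeff_stepLaw_pow {p q : ℝ} (hp : p ∈ Set.Icc (0 : ℝ) 1)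
    (hq : q ∈ Set.Icc (0 : ℝ) 1) (n : ℕ) : IsLogConcave (stepLaw p q ^ n).coeff := by
  induction n with
  | zero => simpa using isLogConcave_coeff_one
  | succ n ih =>
    rw [pow_succ]
    nth_rw 2 [stepLaw]
    rw [← mul_assoc]
    have hY : IsLogConcave (stepLaw p q ^ n * bernoulliLaw q 1).coeff := by
      have := (ih.comp_add_const (-1)).mul_add_mul_shift hq.1 (sub_nonneg.2 hq.2)
      convert this using 2 with ℓ
      rw [coeff_mul_bernoulliLaw]
      ring_nf
    have := hY.mul_add_mul_shift (sub_nonneg.2 hp.2) hp.1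
    convert this using 2 with ℓ
    rw [coeff_mul_bernoulliLaw, sub_neg_eq_add]

lemma stepLaw_pow_coeff_tilt (p q : ℝ) (n : ℕ) :
    ∀ k : ℕ, (q * (1 - p)) ^ k * (stepLaw p q ^ n).coeff (-k)
      = (p * (1 - q)) ^ k * (stepLaw p q ^ n).coeff k := by
  induction n with
  | zero =>
    intro k
    rcases k.eq_zero_or_pos with rfl | hk
    · simp only [pow_zero, Nat.cast_zero, neg_zero]
    · simp only [pow_zero, one_def, coeff_single, Finsupp.single_apply]
      split_ifs <;> first | omega | ring
  | succ n ih =>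
    rintro (_ | k)
    · simp only [pow_zero, Nat.cast_zero, neg_zero]
    · rw [pow_succ (stepLaw p q), coeff_mul_stepLaw, coeff_mul_stepLaw]
      have e₁ : -((k + 1 : ℕ) : ℤ) + 1 = -(k : ℤ) := by push_cast; ring
      have e₂ : -((k + 1 : ℕ) : ℤ) - 1 = -((k + 2 : ℕ) : ℤ) := by push_cast; ring
      have e₃ : ((k + 1 : ℕ) : ℤ) + 1 = ((k + 2 : ℕ) : ℤ) := by push_cast; ring
      have e₄ : ((k + 1 : ℕ) : ℤ) - 1 = k := by push_cast; ring
      rw [e₁, e₂, e₃, e₄]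
      linear_combination (p * (1 - q)) * (q * (1 - p)) * ih k
        + ((1 - p) * (1 - q) + p * q) * ih (k + 1) + ih (k + 2)

lemma stepLaw_pow_coeff_neg_one_le {p q : ℝ} (hp : p ∈ Set.Icc (0 : ℝ) 1)
    (hq : q ∈ Set.Icc (0 : ℝ) 1) (hqp : q ≤ p) (n : ℕ) :
    q * (1 - p) * (stepLaw p q ^ n).coeff (-1) ≤ p * (1 - q) * (stepLaw p q ^ n).coeff 0 := by
  set w := (stepLaw p q ^ n).coeff
  have hw : ∀ ℓ, 0 ≤ w ℓ := coeff_pow_nonneg (stepLaw_coeff_nonneg hp hq) n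
  have htilt : q * (1 - p) * w (-1) = p * (1 - q) * w 1 := by
    simpa using stepLaw_pow_coeff_tilt p q n 1
  have hlc : w (-1) * w 1 ≤ w 0 * w 0 := by
    simpa using isLogConcave_coeff_stepLaw_pow hp hq n 0 0 le_rfl
  have hb : 0 ≤ q * (1 - p) := mul_nonneg hq.1 (sub_nonneg.2 hp.2)
  have hab : q * (1 - p) ≤ p * (1 - q) := by linarith
  have hsq : (q * (1 - p) * w (-1)) ^ 2 ≤ (p * (1 - q) * w 0) ^ 2 :=
    calc (q * (1 - p) * w (-1)) ^ 2 = q * (1 - p) * (p * (1 - q)) * (w (-1) * w 1) := by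
          linear_combination q * (1 - p) * w (-1) * htilt
      _ ≤ q * (1 - p) * (p * (1 - q)) * (w 0 * w 0) := by gcongr; exact mul_nonneg hb (hb.trans hab)
      _ ≤ p * (1 - q) * (p * (1 - q)) * (w 0 * w 0) :=
          mul_le_mul_of_nonneg_right (mul_le_mul_of_nonneg_right hab (hb.trans hab))
            (mul_self_nonneg _)
      _ = (p * (1 - q) * w 0) ^ 2 := by ring
  exact (pow_le_pow_iff_left₀ (mul_nonneg hb (hw _)) (mul_nonneg (hb.trans hab) (hw _))
    two_ne_zero).1 hsq

lemma tailMass_zero_mul_stepLaw (f : ℝ[ℤ]) (p q : ℝ) :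
    tailMass 0 (f * stepLaw p q)
      = tailMass 0 f - p * (1 - q) * f.coeff 0 + q * (1 - p) * f.coeff (-1) := by
  have h₀ := tailMass_eq_coeff_add 0 f
  have h₁ := tailMass_eq_coeff_add (-1) f
  rw [stepLaw, ← mul_assoc, tailMass_mul_bernoulliLaw, tailMass_mul_bernoulliLaw,
    tailMass_mul_bernoulliLaw]
  norm_num at h₀ h₁ ⊢
  linear_combination (1 - p) * q * h₁ - p * (1 - q) * h₀

lemma antitone_tailMass_zero_stepLaw_pow {p q : ℝ} (hp : p ∈ Set.Icc (0 : ℝ) 1)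
    (hq : q ∈ Set.Icc (0 : ℝ) 1) (hqp : q ≤ p) :
    Antitone fun n => tailMass 0 (stepLaw p q ^ n) := by
  refine antitone_nat_of_succ_le fun n => ?_
  rw [pow_succ, tailMass_zero_mul_stepLaw]
  linarith [stepLaw_pow_coeff_neg_one_le hp hq hqp n]

lemma Pn_eq_tailMass (n : ℕ) (p q : ℝ) :
    Pn n p q = tailMass 0 (stepLaw (max p q) (min p q) ^ n) := by
  rw [Pn, Pmn, prGE_eq_tailMass, stepLaw, mul_pow]

lemma Set.max_mem_Icc {α : Type*} [LinearOrder α] {a b x y : α} (hx : x ∈ Set.Icc a b)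
    (hy : y ∈ Set.Icc a b) : max x y ∈ Set.Icc a b :=
  ⟨le_max_of_le_left hx.1, max_le hx.2 hy.2⟩

lemma Set.min_mem_Icc {α : Type*} [LinearOrder α] {a b x y : α} (hx : x ∈ Set.Icc a b)
    (hy : y ∈ Set.Icc a b) : min x y ∈ Set.Icc a b :=
  ⟨le_min hx.1 hy.1, min_le_of_left_le hx.2⟩

lemma Pn_nonneg {p q : ℝ} (hp : p ∈ Set.Icc (0 : ℝ) 1) (hq : q ∈ Set.Icc (0 : ℝ) 1) (n : ℕ) :
    0 ≤ Pn n p q := by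
  rw [Pn_eq_tailMass]
  exact tailMass_nonneg 0 <| coeff_pow_nonneg
    (stepLaw_coeff_nonneg (Set.max_mem_Icc hp hq) (Set.min_mem_Icc hp hq)) n

lemma Pn_pow_le {p q : ℝ} (hp : p ∈ Set.Icc (0 : ℝ) 1) (hq : q ∈ Set.Icc (0 : ℝ) 1)
    {m n K : ℕ} (h : n ≤ m * K) : Pn m p q ^ K ≤ Pn n p q := by
  have hmax := Set.max_mem_Icc hp hq
  have hmin := Set.min_mem_Icc hp hq
  rw [Pn_eq_tailMass, Pn_eq_tailMass]
  calc tailMass 0 (stepLaw (max p q) (min p q) ^ m) ^ K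
      ≤ tailMass 0 ((stepLaw (max p q) (min p q) ^ m) ^ K) :=
        tailMass_zero_pow_le (coeff_pow_nonneg (stepLaw_coeff_nonneg hmax hmin) m) K
    _ ≤ tailMass 0 (stepLaw (max p q) (min p q) ^ n) := by
        rw [← pow_mul]
        exact antitone_tailMass_zero_stepLaw_pow hmax hmin min_le_max h

lemma le_natFloor_mul_of_two_div_le {α : ℝ} (hα : 0 < α) {K n : ℕ} (hK : 2 / α ≤ K)
    (hn : 2 / α ≤ n) : n ≤ ⌊α * n⌋₊ * K := by
  have hαn : 2 ≤ α * n := by rwa [div_le_iff₀ hα, mul_comm] at hn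
  have hfloor : α * n / 2 ≤ ⌊α * n⌋₊ := by linarith [Nat.sub_one_lt_floor (α * n)]
  have : (n : ℝ) ≤ ⌊α * n⌋₊ * K :=
    calc (n : ℝ) = α * n / 2 * (2 / α) := by field_simp
      _ ≤ ⌊α * n⌋₊ * K := by gcongr
  exact_mod_cast this

theorem P_scaled_size_tendsto_zero
    (p q : ℕ → ℝ) (hp : ∀ n, p n ∈ Set.Icc (0 : ℝ) 1) (hq : ∀ n, q n ∈ Set.Icc (0 : ℝ) 1)
    (h : Tendsto (fun n : ℕ => (n : ℝ) * Pn n (p n) (q n)) atTop (nhds 0)) :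
    ∀ α : ℝ, 0 < α →
      Tendsto (fun n : ℕ => Pn ⌊α * (n : ℝ)⌋₊ (p n) (q n)) atTop (nhds 0) := by
  intro α hα
  obtain ⟨K, hK⟩ := exists_nat_ge (2 / α)
  have hK0 : (0 : ℝ) < K := (by positivity : (0 : ℝ) < 2 / α).trans_le hK
  have hP0 (m n : ℕ) : 0 ≤ Pn m (p n) (q n) := Pn_nonneg (hp n) (hq n) m
  have hbound : ∀ᶠ n : ℕ in atTop,
      Pn ⌊α * n⌋₊ (p n) (q n) ≤ ((n : ℝ) * Pn n (p n) (q n)) ^ (K : ℝ)⁻¹ := by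
    filter_upwards [eventually_ge_atTop ⌈2 / α⌉₊, eventually_ge_atTop 1] with n hn hn1
    rw [Real.le_rpow_inv_iff_of_pos (hP0 _ _) (mul_nonneg n.cast_nonneg (hP0 _ _)) hK0,
      Real.rpow_natCast]
    calc Pn ⌊α * n⌋₊ (p n) (q n) ^ K ≤ Pn n (p n) (q n) :=
          Pn_pow_le (hp n) (hq n) (le_natFloor_mul_of_two_div_le hα hK (Nat.ceil_le.1 hn))
      _ ≤ n * Pn n (p n) (q n) := le_mul_of_one_le_left (hP0 _ _) (by exact_mod_cast hn1)
  have hlim : Tendsto (fun n : ℕ => ((n : ℝ) * Pn n (p n) (q n)) ^ (K : ℝ)⁻¹) atTop (nhds 0) := by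
    simpa [Real.zero_rpow, hK0.ne'] using h.rpow_const (p := (K : ℝ)⁻¹) (Or.inr (by positivity))
  exact tendsto_of_tendsto_of_tendsto_of_le_of_le' tendsto_const_nhds hlim
    (Eventually.of_forall fun n => hP0 _ _) hbound
end
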